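/- Let R be a 2-torsion free commutative ring with identity (2r = 0 implies r = 0), X a locally finite preordered set, and D : I(X,R) → I(X,R) a Jordan derivation of the incidence algebra (an R-linear map with D(f²) = D(f)f + fD(f) for all f). Then for every i ∈ X, D(e_{ii})(i,i) = 0 and D(e_{ii})(u,v) = 0 for all u ≤ v with u ≠ i and v ≠ i; that is, D(e_{ii}) = Σ_{x ≤ i, x ≠ i} D(e_{ii})(x,i) e_{xi} + Σ_{i ≤ y, y ≠ i} D(e_{ii})(i,y) e_{iy} (pointwise). -/
import Mathlib

/-- The "matrix unit" `e_{xy}` of the incidence algebra: the element equal to `1` at `(x, y)`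
(where `x ≤ y`) and `0` elsewhere. -/
def eSingle (R : Type*) [CommRing R] {X : Type*} [Preorder X] [DecidableEq X]
    (x y : X) (h : x ≤ y) : IncidenceAlgebra R X :=
  ⟨fun a b => if a = x ∧ b = y then 1 else 0,
   fun a b hab => if_neg (by rintro ⟨rfl, rfl⟩; exact hab h)⟩

lemma eSingle_apply (R : Type*) [CommRing R] {X : Type*} [Preorder X] [DecidableEq X]
    (x y : X) (h : x ≤ y) (a b : X) :
    eSingle R x y h a b = if a = x ∧ b = y then 1 else 0 := rfl

lemma eSingle_idem (R : Type*) [CommRing R] {X : Type*} [Preorder X] [LocallyFiniteOrder X]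
    [DecidableEq X] (i : X) :
    eSingle R i i le_rfl * eSingle R i i le_rfl = eSingle R i i le_rfl := by
  apply IncidenceAlgebra.ext
  intro a b hab
  rw [IncidenceAlgebra.mul_apply]
  simp only [eSingle_apply]
  by_cases ha : a = i
  · by_cases hb : b = i
    · rw [ha, hb]
      rw [Finset.sum_eq_single i]
      · simp
      · intro x hx hxi; simp [hxi]
      · intro h; exact absurd (Finset.mem_Icc.2 ⟨le_rfl, le_rfl⟩) h
    · simp [hb]
  · simp [ha]

/-- If `R` is 2-torsion free and `D` is a Jordan derivation of the incidence
algebra `I(X,R)`, then for every `i ∈ X` we have `D(e_{ii})(i,i) = 0` and `D(e_{ii})(u,v) = 0`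
for all `u ≤ v` with `u ≠ i` and `v ≠ i`. -/
theorem jordan_derivation_apply_eSingle_diag {R X : Type*} [CommRing R]
    [Preorder X] [LocallyFiniteOrder X] [DecidableEq X]
    (htf : ∀ r : R, 2 • r = 0 → r = 0)
    (D : IncidenceAlgebra R X →ₗ[R] IncidenceAlgebra R X)
    (hD : ∀ f : IncidenceAlgebra R X, D (f * f) = D f * f + f * D f) (i : X) :
    D (eSingle R i i le_rfl) i i = 0 ∧
      ∀ u v : X, u ≤ v → u ≠ i → v ≠ i → D (eSingle R i i le_rfl) u v = 0 := by
  set e := eSingle R i i le_rfl with he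
  have hee : e * e = e := eSingle_idem R i
  have key : D e = D e * e + e * D e := by
    have h := hD e; rwa [hee] at h
  have hright : ∀ f : IncidenceAlgebra R X, ∀ u v : X, v ≠ i → (f * e) u v = 0 := by
    intro f u v hv
    rw [IncidenceAlgebra.mul_apply]
    apply Finset.sum_eq_zero
    intro x hx
    rw [he, eSingle_apply, if_neg (by rintro ⟨_, rfl⟩; exact hv rfl), mul_zero]
  have hleft : ∀ f : IncidenceAlgebra R X, ∀ u v : X, u ≠ i → (e * f) u v = 0 := by
    intro f u v hu
    rw [IncidenceAlgebra.mul_apply]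
    apply Finset.sum_eq_zero
    intro x hx
    rw [he, eSingle_apply, if_neg (by rintro ⟨rfl, _⟩; exact hu rfl), zero_mul]
  constructor
  · have h1 : (D e * e) i i = D e i i := by
      rw [IncidenceAlgebra.mul_apply, Finset.sum_eq_single i]
      · simp [he, eSingle_apply]
      · intro x hx hxi; simp [he, eSingle_apply, hxi]
      · intro h; exact absurd (Finset.mem_Icc.2 ⟨le_rfl, le_rfl⟩) h
    have h2 : (e * D e) i i = D e i i := by
      rw [IncidenceAlgebra.mul_apply, Finset.sum_eq_single i]
      · simp [he, eSingle_apply]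
      · intro x hx hxi; simp [he, eSingle_apply, hxi]
      · intro h; exact absurd (Finset.mem_Icc.2 ⟨le_rfl, le_rfl⟩) h
    have := congrArg (fun f : IncidenceAlgebra R X => f i i) key
    simp only [IncidenceAlgebra.add_apply, h1, h2] at this
    linear_combination -this
  · intro u v huv hu hv
    have := congrArg (fun f : IncidenceAlgebra R X => f u v) key
    simp only [IncidenceAlgebra.add_apply] at this
    rw [hright (D e) u v hv, hleft (D e) u v hu] at this
    simpa using this
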